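/- arXiv:1805.12523 — 4 statements merged into one kernel-verified Lean document; each statement's English description precedes it below -/
import Mathlib

section
/- Let a, b, c be integers greater than 1 with gcd(a,b,c) = 1. Then there exist integers x, y, z such that gcd(a, bx + cy) = 1, gcd(b, ax + cz) = 1, and gcd(c, ay + bz) = 1. -/
/-!
Take `x` with prime divisors those of both `a` and `b`, `y` with those of `a` not dividing `b`,
and `z` with those of `bc` not dividing `a`. Since no prime divides all of `a`, `b`, `c`, a case
check on which of `a`, `b`, `c` a prime `p` divides shows that whenever `p` divides the first
argument of one of the three gcds, it divides exactly one of the two summands of the second.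
-/

namespace Int

theorem gcd_eq_one_of_forall_prime {a m : ℤ}
    (h : ∀ p : ℕ, p.Prime → (p : ℤ) ∣ a → ¬(p : ℤ) ∣ m) : Int.gcd a m = 1 :=
  Nat.coprime_of_dvd fun p hp hpa hpm => h p hp (natCast_dvd.2 hpa) (natCast_dvd.2 hpm)

theorem gcd_add_eq_one_of_forall_prime_xor {a m n : ℤ}
    (h : ∀ p : ℕ, p.Prime → (p : ℤ) ∣ a → Xor ((p : ℤ) ∣ m) ((p : ℤ) ∣ n)) :
    Int.gcd a (m + n) = 1 := by
  refine gcd_eq_one_of_forall_prime fun p hp hpa => ?_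
  rcases h p hp hpa with ⟨hm, hn⟩ | ⟨hn, hm⟩
  · rwa [dvd_add_right hm]
  · rwa [dvd_add_left hn]

theorem exists_prime_dvd_iff_dvd_and {n : ℤ} (hn : n ≠ 0) (P : ℕ → Prop) :
    ∃ m : ℤ, ∀ p : ℕ, p.Prime → ((p : ℤ) ∣ m ↔ (p : ℤ) ∣ n ∧ P p) := by
  classical
  refine ⟨∏ q ∈ n.natAbs.primeFactors with P q, (q : ℤ), fun p hp => ?_⟩
  rw [(Nat.prime_iff_prime_int.1 hp).dvd_finsetProd_iff]
  constructor
  · rintro ⟨q, hq, hpq⟩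
    rw [Finset.mem_filter, Nat.mem_primeFactors] at hq
    obtain rfl := (Nat.prime_dvd_prime_iff_eq hp hq.1.1).1 (natCast_dvd_natCast.1 hpq)
    exact ⟨natCast_dvd.2 hq.1.2.1, hq.2⟩
  · rintro ⟨hpn, hP⟩
    have hp_mem : p ∈ n.natAbs.primeFactors :=
      Nat.mem_primeFactors.2 ⟨hp, natCast_dvd.1 hpn, natAbs_ne_zero.2 hn⟩
    exact ⟨p, Finset.mem_filter.2 ⟨hp_mem, hP⟩, dvd_rfl⟩

theorem not_prime_dvd_of_gcd_gcd_eq_one {a b c : ℤ} (h : Int.gcd (Int.gcd a b) c = 1)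
    {p : ℕ} (hp : p.Prime) (ha : (p : ℤ) ∣ a) (hb : (p : ℤ) ∣ b) : ¬(p : ℤ) ∣ c := by
  intro hc
  have hp_dvd := dvd_coe_gcd (dvd_coe_gcd ha hb) hc
  rw [h, Nat.cast_one, natCast_dvd_ofNat, Nat.dvd_one] at hp_dvd
  exact hp.ne_one hp_dvd

end Int

theorem algebraic_lemma (a b c : ℤ) (ha : 1 < a) (hb : 1 < b) (hc : 1 < c)
    (h : Int.gcd (Int.gcd a b) c = 1) :
    ∃ x y z : ℤ, Int.gcd a (b * x + c * y) = 1 ∧ Int.gcd b (a * x + c * z) = 1 ∧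
      Int.gcd c (a * y + b * z) = 1 := by
  obtain ⟨x, hx⟩ :=
    Int.exists_prime_dvd_iff_dvd_and (n := a) (by positivity) fun p => (p : ℤ) ∣ b
  obtain ⟨y, hy⟩ :=
    Int.exists_prime_dvd_iff_dvd_and (n := a) (by positivity) fun p => ¬(p : ℤ) ∣ b
  obtain ⟨z, hz⟩ :=
    Int.exists_prime_dvd_iff_dvd_and (n := b * c) (by positivity) fun p => ¬(p : ℤ) ∣ a
  refine ⟨x, y, z, ?_, ?_, ?_⟩ <;>
    refine Int.gcd_add_eq_one_of_forall_prime_xor fun p hp hp_dvd => ?_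
  all_goals
    have hp_not_dvd_all := Int.not_prime_dvd_of_gcd_gcd_eq_one h hp
    simp only [(Nat.prime_iff_prime_int.1 hp).dvd_mul, hx p hp, hy p hp, hz p hp]
    tauto
end

section
/- Let a, b, c be integers greater than 1 with gcd(a,b,c) = 1 and c odd. Write a = α·c₁ where gcd(α,c) = 1 and every prime factor of c₁ divides c; write b = β·c₂ where gcd(β,c) = 1 and every prime factor of c₂ divides c; write c = γ·c₃ where gcd(γ,a) = gcd(γ,b) = 1 and every prime factor of c₃ divides a or b. Then gcd(a, bαβ − cbαβ + cγ) = 1. -/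
/-!
Let `p` be a prime dividing `a`, and `N₁ = bαβ - cbαβ + cγ`. If `p ∣ c`, then `N₁ ≡ bαβ (mod p)`,
and `p` divides none of `b, α, β`: `α, β` are coprime to `c`, and `gcd(a, b, c) = 1`.
If `p ∤ c`, then `p ∣ α`, since every prime factor of `c₁` divides `c`; hence `N₁ ≡ cγ (mod p)`,
and `p ∤ γ` because `gcd(γ, a) = 1`.
-/

theorem Int.gcd_eq_one_of_forall_prime_s1 {m n : ℤ} (h : ∀ p : ℤ, Prime p → p ∣ m → ¬p ∣ n) :
    Int.gcd m n = 1 :=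
  Nat.coprime_of_dvd fun k hk hm hn =>
    h k (Nat.prime_iff_prime_int.mp hk) (Int.natCast_dvd.mpr hm) (Int.natCast_dvd.mpr hn)

theorem Prime.not_dvd_of_gcd_eq_one {p x y : ℤ} (hp : Prime p) (h : Int.gcd x y = 1)
    (hx : p ∣ x) : ¬p ∣ y := fun hy =>
  hp.not_isUnit ((Int.isCoprime_iff_gcd_eq_one.mpr h).isUnit_of_dvd' hx hy)

section

variable {R : Type*} [CommRing R] {p b c α β γ : R}

theorem Prime.not_dvd_N₁_of_dvd_c (hp : Prime p) (hpc : p ∣ c) (hb : ¬p ∣ b) (hα : ¬p ∣ α)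
    (hβ : ¬p ∣ β) : ¬p ∣ b * α * β - c * b * α * β + c * γ := by
  have hN : b * α * β - c * b * α * β + c * γ = b * α * β + c * (γ - b * α * β) := by ring
  rw [hN, dvd_add_left (hpc.mul_right _), hp.dvd_mul, hp.dvd_mul]
  tauto

theorem Prime.not_dvd_N₁_of_not_dvd_c (hp : Prime p) (hpα : p ∣ α) (hpc : ¬p ∣ c)
    (hγ : ¬p ∣ γ) : ¬p ∣ b * α * β - c * b * α * β + c * γ := by
  have hN : b * α * β - c * b * α * β + c * γ = c * γ + α * (b * β - c * b * β) := by ring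
  rw [hN, dvd_add_left (hpα.mul_right _), hp.dvd_mul]
  tauto

end

theorem claim1_general (a b c α β γ c₁ : ℤ)
    (hgcd : Int.gcd (Int.gcd a b) c = 1)
    (hafac : a = α * c₁) (hαc : Int.gcd α c = 1)
    (hc₁ : ∀ p : ℤ, Prime p → p ∣ c₁ → p ∣ c)
    (hβc : Int.gcd β c = 1)
    (hγa : Int.gcd γ a = 1) :
    Int.gcd a (b * α * β - c * b * α * β + c * γ) = 1 := by
  refine Int.gcd_eq_one_of_forall_prime_s1 fun p hp hpa => ?_
  by_cases hpc : p ∣ c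
  · have hpb : ¬p ∣ b := fun hpb =>
      hp.not_dvd_of_gcd_eq_one hgcd (Int.dvd_coe_gcd hpa hpb) hpc
    exact hp.not_dvd_N₁_of_dvd_c hpc hpb (fun hpα => hp.not_dvd_of_gcd_eq_one hαc hpα hpc)
      (fun hpβ => hp.not_dvd_of_gcd_eq_one hβc hpβ hpc)
  · have hpα : p ∣ α := (hp.dvd_mul.mp (hafac ▸ hpa)).resolve_right (mt (hc₁ p hp) hpc)
    exact hp.not_dvd_N₁_of_not_dvd_c hpα hpc
      (fun hpγ => hp.not_dvd_of_gcd_eq_one hγa hpγ hpa)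

theorem claim1 (a b c α β γ c₁ c₂ c₃ : ℤ)
    (ha : 1 < a) (hb : 1 < b) (hc : 1 < c)
    (hgcd : Int.gcd (Int.gcd a b) c = 1) (hodd : Odd c)
    (hafac : a = α * c₁) (hαc : Int.gcd α c = 1)
    (hc₁ : ∀ p : ℤ, Prime p → p ∣ c₁ → p ∣ c)
    (hbfac : b = β * c₂) (hβc : Int.gcd β c = 1)
    (hc₂ : ∀ p : ℤ, Prime p → p ∣ c₂ → p ∣ c)
    (hcfac : c = γ * c₃) (hγa : Int.gcd γ a = 1) (hγb : Int.gcd γ b = 1)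
    (hc₃ : ∀ p : ℤ, Prime p → p ∣ c₃ → p ∣ a ∨ p ∣ b) :
    Int.gcd a (b * α * β - c * b * α * β + c * γ) = 1 :=
  claim1_general a b c α β γ c₁ hgcd hafac hαc hc₁ hβc hγa
end

section
/- Let p₁, p₂, p₃ be integers greater than 1 with gcd(p₁,p₂,p₃) = 1. Then there exist integers q₁, q₂, q₃ and a₁₂, a₁₃, a₂₃ such that gcd(p₁,q₁) = gcd(p₂,q₂) = gcd(p₃,q₃) = 1 and q₁ + a₁₂p₂ + a₁₃p₃ = 0, q₂ + a₁₂p₁ + a₂₃p₃ = 0, q₃ + a₁₃p₁ + a₂₃p₂ = 0. -/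
/-!
Take `a₂₃ = 1` and `a₁₂ ≡ x`, `a₁₃ ≡ y (mod p₁)` for a Bézout pair `x p₂ + y p₃ = gcd(p₂, p₃)`.
Then `a₁₂ p₂ + a₁₃ p₃ ≡ gcd(p₂, p₃) (mod p₁)` is prime to `p₁`, and within these residue classes
`a₁₂` and `a₁₃` can still be chosen so that `a₁₂ p₁ + p₃` is prime to `p₂` and `a₁₃ p₁ + p₂` prime
to `p₃`: an arithmetic progression `a + k b` meets the units modulo `n` as soon as no prime
divides all of `a`, `b`, `n`.
-/

theorem Int.exists_isCoprime_add_mul {a b n : ℤ} (hn : n ≠ 0)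
    (h : ∀ p : ℤ, Prime p → p ∣ n → p ∣ a → ¬ p ∣ b) : ∃ k, IsCoprime n (a + k * b) := by
  let k : ℤ := ∏ p ∈ n.natAbs.primeFactors.filter fun p : ℕ => ¬ (p : ℤ) ∣ a, (p : ℤ)
  refine ⟨k, isCoprime_of_prime_dvd (fun hn0 => hn hn0.1) fun q hq hqn hqab => ?_⟩
  by_cases hqa : q ∣ a
  · have hqk : q ∣ k :=
      (hq.dvd_mul.mp ((dvd_add_right hqa).mp hqab)).resolve_right (h q hq hqn hqa)
    obtain ⟨p, hp, hqp⟩ := (hq.dvd_finsetProd_iff _).mp hqk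
    rw [Finset.mem_filter, Nat.mem_primeFactors] at hp
    have hqp' : Associated q p := hq.associated_of_dvd (Nat.prime_iff_prime_int.mp hp.1.1) hqp
    exact hp.2 (hqp'.dvd_iff_dvd_left.mp hqa)
  · have hmem : q.natAbs ∈ n.natAbs.primeFactors.filter fun p : ℕ => ¬ (p : ℤ) ∣ a := by
      rw [Finset.mem_filter, Nat.mem_primeFactors, Int.natAbs_dvd]
      exact ⟨⟨Int.prime_iff_natAbs_prime.mp hq, Int.natAbs_dvd_natAbs.mpr hqn,
        Int.natAbs_ne_zero.mpr hn⟩, hqa⟩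
    have hqk : q ∣ k := Int.natAbs_dvd.mp (Finset.dvd_prod_of_mem _ hmem)
    exact hqa ((dvd_add_left (hqk.mul_right b)).mp hqab)

theorem exists_isCoprime_add_mul_mul_add {p₁ p₂ p₃ : ℤ} (x : ℤ) (hp₂ : p₂ ≠ 0)
    (h : ∀ q : ℤ, Prime q → q ∣ p₁ → q ∣ p₂ → ¬ q ∣ p₃) :
    ∃ s, IsCoprime p₂ ((x + s * p₁) * p₁ + p₃) := by
  obtain ⟨s, hs⟩ := Int.exists_isCoprime_add_mul (a := x * p₁ + p₃) (b := p₁ ^ 2) hp₂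
    fun q hq hq₂ hqa hq₁₁ => by
      have hq₁ : q ∣ p₁ := hq.dvd_of_dvd_pow hq₁₁
      exact h q hq hq₁ hq₂ ((dvd_add_right (hq₁.mul_left x)).mp hqa)
  exact ⟨s, by convert hs using 1; ring⟩

theorem exists_cable_slopes_general (p₁ p₂ p₃ : ℤ) (hp₂ : 1 < p₂) (hp₃ : 1 < p₃)
    (hgcd : Int.gcd (Int.gcd p₁ p₂) p₃ = 1) :
    ∃ q₁ q₂ q₃ a₁₂ a₁₃ a₂₃ : ℤ,
      Int.gcd p₁ q₁ = 1 ∧ Int.gcd p₂ q₂ = 1 ∧ Int.gcd p₃ q₃ = 1 ∧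
      q₁ + a₁₂ * p₂ + a₁₃ * p₃ = 0 ∧ q₂ + a₁₂ * p₁ + a₂₃ * p₃ = 0 ∧
      q₃ + a₁₃ * p₁ + a₂₃ * p₂ = 0 := by
  have hprime : ∀ q : ℤ, Prime q → q ∣ p₁ → q ∣ p₂ → ¬ q ∣ p₃ := fun q hq h₁ h₂ h₃ =>
    hq.not_dvd_one (by simpa [hgcd] using Int.dvd_coe_gcd (Int.dvd_coe_gcd h₁ h₂) h₃)
  obtain ⟨s, hq₂⟩ := exists_isCoprime_add_mul_mul_add (Int.gcdA p₂ p₃) (by omega) hprime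
  obtain ⟨t, hq₃⟩ := exists_isCoprime_add_mul_mul_add (Int.gcdB p₂ p₃) (by omega)
    fun q hq h₁ h₃ h₂ => hprime q hq h₁ h₂ h₃
  set a₁₂ := Int.gcdA p₂ p₃ + s * p₁
  set a₁₃ := Int.gcdB p₂ p₃ + t * p₁
  have hq₁ : IsCoprime p₁ (a₁₂ * p₂ + a₁₃ * p₃) := by
    have hd : IsCoprime p₁ (Int.gcd p₂ p₃) :=
      Int.isCoprime_iff_gcd_eq_one.mpr (Int.gcd_assoc p₁ p₂ p₃ ▸ hgcd)
    have hsum : a₁₂ * p₂ + a₁₃ * p₃ = Int.gcd p₂ p₃ + p₁ * (s * p₂ + t * p₃) := by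
      rw [Int.gcd_eq_gcd_ab]
      ring
    exact hsum ▸ hd.add_mul_left_right _
  refine ⟨-(a₁₂ * p₂ + a₁₃ * p₃), -(a₁₂ * p₁ + p₃), -(a₁₃ * p₁ + p₂), a₁₂, a₁₃, 1,
    ?_, ?_, ?_, by ring, by ring, by ring⟩ <;> rw [Int.gcd_neg, ← Int.isCoprime_iff_gcd_eq_one]
  exacts [hq₁, hq₂, hq₃]

theorem exists_cable_slopes (p₁ p₂ p₃ : ℤ) (hp₁ : 1 < p₁) (hp₂ : 1 < p₂) (hp₃ : 1 < p₃)
    (hgcd : Int.gcd (Int.gcd p₁ p₂) p₃ = 1) :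
    ∃ q₁ q₂ q₃ a₁₂ a₁₃ a₂₃ : ℤ,
      Int.gcd p₁ q₁ = 1 ∧ Int.gcd p₂ q₂ = 1 ∧ Int.gcd p₃ q₃ = 1 ∧
      q₁ + a₁₂ * p₂ + a₁₃ * p₃ = 0 ∧ q₂ + a₁₂ * p₁ + a₂₃ * p₃ = 0 ∧
      q₃ + a₁₃ * p₁ + a₂₃ * p₂ = 0 :=
  exists_cable_slopes_general p₁ p₂ p₃ hp₂ hp₃ hgcd
end

section
/- Let a, b, c be integers greater than 1 with gcd(a,b,c) = 1 and c odd, and factor a = αc₁, b = βc₂, c = γc₃ as follows: gcd(α,c) = 1 and every prime of c₁ divides c; gcd(β,c) = 1 and every prime of c₂ divides c; gcd(γ,a) = gcd(γ,b) = 1 and every prime of c₃ divides a or b. Then gcd(b, aαβ − caαβ + cγ) = 1. -/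
/-! Write `N = aαβ - caαβ + cγ` and `b = βc₂`; it suffices that `N` is coprime to `β` and to `c₂`.
Modulo `β`, `N ≡ cγ`, a product of two numbers coprime to `β`. Every prime of `c₂` divides
`d = gcd(b, c)`, and modulo `d` (a divisor of `c`) `N ≡ aαβ`, which is coprime to `d` because
`gcd(a, d) = gcd(a, b, c) = 1`, `α ∣ a` and `d ∣ c` with `gcd(β, c) = 1`. -/

theorem IsCoprime.add_mul_right_iff_of_dvd {R : Type*} [CommRing R] {d c x y : R} (h : d ∣ c) :
    IsCoprime d (x + c * y) ↔ IsCoprime d x := by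
  obtain ⟨k, rfl⟩ := h
  rw [mul_assoc, IsCoprime.add_mul_left_right_iff]

theorem Int.isCoprime_of_forall_prime_dvd_imp_dvd {m n x : ℤ}
    (hmn : ∀ p : ℤ, Prime p → p ∣ m → p ∣ n) (hn : IsCoprime n x) : IsCoprime m x := by
  refine isCoprime_of_prime_dvd ?_ fun p hp hpm hpx ↦
    hp.not_isUnit (hn.isUnit_of_dvd' (hmn p hp hpm) hpx)
  rintro ⟨rfl, rfl⟩
  -- `m = x = 0` would force the unit `n` to be divisible by the prime `2`
  exact Int.prime_two.not_isUnit
    (isUnit_of_dvd_unit (hmn 2 Int.prime_two (dvd_zero 2)) (isCoprime_zero_right.mp hn))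

theorem claim2_general (a b c α β γ c₁ c₂ : ℤ)
    (hgcd : Int.gcd (Int.gcd a b) c = 1)
    (hafac : a = α * c₁)
    (hbfac : b = β * c₂) (hβc : Int.gcd β c = 1)
    (hc₂ : ∀ p : ℤ, Prime p → p ∣ c₂ → p ∣ c)
    (hγb : Int.gcd γ b = 1) :
    Int.gcd b (a * α * β - c * a * α * β + c * γ) = 1 := by
  rw [Int.gcd_assoc] at hgcd
  rw [← Int.isCoprime_iff_gcd_eq_one] at hgcd hβc hγb ⊢
  set d : ℤ := ((Int.gcd b c : ℕ) : ℤ)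
  have hdc : d ∣ c := Int.gcd_dvd_right b c
  have hβ : IsCoprime β (a * α * β - c * a * α * β + c * γ) := by
    rw [show a * α * β - c * a * α * β + c * γ = c * γ + β * (a * α * (1 - c)) by ring,
      IsCoprime.add_mul_right_iff_of_dvd dvd_rfl]
    exact hβc.mul_right (hbfac ▸ hγb).of_mul_right_left.symm
  have hd : IsCoprime d (a * α * β - c * a * α * β + c * γ) := by
    rw [show a * α * β - c * a * α * β + c * γ = a * α * β + c * (γ - a * α * β) by ring,
      IsCoprime.add_mul_right_iff_of_dvd hdc]
    have hda : IsCoprime d a := hgcd.symm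
    have hdα : IsCoprime d α := (hafac ▸ hda).of_mul_right_left
    have hdβ : IsCoprime d β := (hβc.of_isCoprime_of_dvd_right hdc).symm
    exact (hda.mul_right hdα).mul_right hdβ
  have hc₂d : ∀ p : ℤ, Prime p → p ∣ c₂ → p ∣ d := fun p hp hpc₂ ↦
    Int.dvd_coe_gcd (hbfac ▸ dvd_mul_of_dvd_right hpc₂ β) (hc₂ p hp hpc₂)
  rw [hbfac, IsCoprime.mul_left_iff]
  exact ⟨hβ, Int.isCoprime_of_forall_prime_dvd_imp_dvd hc₂d hd⟩

theorem claim2 (a b c α β γ c₁ c₂ c₃ : ℤ)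
    (ha : 1 < a) (hb : 1 < b) (hc : 1 < c)
    (hgcd : Int.gcd (Int.gcd a b) c = 1) (hodd : Odd c)
    (hafac : a = α * c₁) (hαc : Int.gcd α c = 1)
    (hc₁ : ∀ p : ℤ, Prime p → p ∣ c₁ → p ∣ c)
    (hbfac : b = β * c₂) (hβc : Int.gcd β c = 1)
    (hc₂ : ∀ p : ℤ, Prime p → p ∣ c₂ → p ∣ c)
    (hcfac : c = γ * c₃) (hγa : Int.gcd γ a = 1) (hγb : Int.gcd γ b = 1)
    (hc₃ : ∀ p : ℤ, Prime p → p ∣ c₃ → p ∣ a ∨ p ∣ b) :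
    Int.gcd b (a * α * β - c * a * α * β + c * γ) = 1 :=
  claim2_general a b c α β γ c₁ c₂ hgcd hafac hbfac hβc hc₂ hγb
end
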